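/- Let M = Z[t^{±1}]/(f₁(t),…,f_k(t)) be an Alexander quandle and let a = gcd(f₁(1),…,f_k(1)). Then [α(t)] and [β(t)] lie in the same connected component of M if and only if α(1) ≡ β(1) (mod a). -/

import Mathlib

open LaurentPolynomial

/-- Evaluation of a Laurent polynomial at `t = 1`, as a ring homomorphism. -/
noncomputable def evalOne : LaurentPolynomial ℤ →+* ℤ :=
  ((AddMonoidAlgebra.lift ℤ ℤ ℤ) 1).toRingHom

/-- The Alexander quandle operation `[α]*[β] = [tα + (1-t)β]` on `ℤ[t,t⁻¹]⧸J`. -/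
noncomputable def qOp (J : Ideal (LaurentPolynomial ℤ)) (x y : LaurentPolynomial ℤ ⧸ J) :
    LaurentPolynomial ℤ ⧸ J :=
  Ideal.Quotient.mk J (T 1) * x + (1 - Ideal.Quotient.mk J (T 1)) * y

/-- The orbit relation of the inner automorphism group. -/
def qRel (J : Ideal (LaurentPolynomial ℤ)) :
    (LaurentPolynomial ℤ ⧸ J) → (LaurentPolynomial ℤ ⧸ J) → Prop :=
  Relation.EqvGen fun x y => ∃ c, qOp J x c = y

lemma evalOne_single (n : ℤ) (c : ℤ) : evalOne (AddMonoidAlgebra.single n c) = c := by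
  have := AddMonoidAlgebra.lift_single (R := ℤ) (M := ℤ) (A := ℤ)
    (1 : Multiplicative ℤ →* ℤ) n c
  simpa [evalOne] using this

lemma evalOne_T (n : ℤ) : evalOne (T n) = 1 :=
  evalOne_single n 1

lemma evalOne_C (c : ℤ) : evalOne (C c) = c := by
  rw [← single_eq_C]; exact evalOne_single 0 c

lemma T_sub_one_mem (n : ℤ) :
    (T n - 1 : LaurentPolynomial ℤ) ∈ Ideal.span {(T 1 - 1 : LaurentPolynomial ℤ)} := by
  have hnat : ∀ m : ℕ, (T (m : ℤ) - 1 : LaurentPolynomial ℤ) ∈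
      Ideal.span {(T 1 - 1 : LaurentPolynomial ℤ)} := by
    intro m
    induction m with
    | zero => simp
    | succ m ih =>
        have h : (T (((m : ℕ) + 1 : ℕ) : ℤ) - 1 : LaurentPolynomial ℤ)
            = T (m : ℤ) * (T 1 - 1) + (T (m : ℤ) - 1) := by
          push_cast
          rw [T_add]; ring
        rw [h]
        exact add_mem (Ideal.mul_mem_left _ _ (Ideal.subset_span rfl)) ih
  rcases le_or_gt 0 n with h | h
  · obtain ⟨m, rfl⟩ := Int.eq_ofNat_of_zero_le h
    exact hnat m
  · have hm : n = -(((-n).toNat : ℕ) : ℤ) := by omega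
    rw [hm]
    have key : (T (-(((-n).toNat : ℕ) : ℤ)) - 1 : LaurentPolynomial ℤ)
        = -T (-(((-n).toNat : ℕ) : ℤ)) * (T (((-n).toNat : ℕ) : ℤ) - 1) := by
      rw [neg_mul, mul_sub, ← T_add]
      simp
    rw [key]
    exact Ideal.mul_mem_left _ _ (hnat _)

lemma sub_evalOne_mem (p : LaurentPolynomial ℤ) :
    p - C (evalOne p) ∈ Ideal.span {(T 1 - 1 : LaurentPolynomial ℤ)} := by
  induction p using AddMonoidAlgebra.induction with
  | zero => simp
  | single_add n c g hn hc ih =>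
      rw [map_add, evalOne_single, map_add]
      have h := add_mem (Ideal.mul_mem_left _ (C c) (T_sub_one_mem n)) ih
      convert h using 1
      rw [single_eq_C_mul_T]
      ring

lemma gcd_mem_span {ι : Type*} (s : Finset ι) (g : ι → ℤ) :
    (s.gcd g : ℤ) ∈ Ideal.span (g '' (s : Set ι)) := by
  classical
  induction s using Finset.induction with
  | empty => simp [Finset.gcd_empty]
  | @insert a s ha ih =>
      rw [Finset.gcd_insert]
      have h2 : Ideal.span {g a, s.gcd g}
          ≤ Ideal.span (g '' ((insert a s : Finset ι) : Set ι)) := by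
        rw [Ideal.span_le]
        rintro x hx
        rcases hx with rfl | rfl
        · exact Ideal.subset_span ⟨a, by simp, rfl⟩
        · exact Ideal.span_mono (Set.image_mono (by simp)) ih
      apply h2
      rw [← span_gcd]
      exact Ideal.subset_span rfl

set_option maxHeartbeats 1000000 in
set_option synthInstance.maxHeartbeats 400000 in
/-- In the Alexander quandle `M = ℤ[t,t⁻¹]/(f₁,…,f_k)` with
`a = gcd(f₁(1),…,f_k(1))`, `[α]` and `[β]` lie in the same connected component
iff `α(1) ≡ β(1) (mod a)`. -/
theorem stmt_5 {k : ℕ} (f : Fin k → LaurentPolynomial ℤ) (α β : LaurentPolynomial ℤ) :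
    qRel (Ideal.span (Set.range f)) (Ideal.Quotient.mk _ α) (Ideal.Quotient.mk _ β) ↔
      evalOne α ≡ evalOne β [ZMOD Finset.univ.gcd fun i => evalOne (f i)] := by
  set a : ℤ := Finset.univ.gcd fun i => evalOne (f i) with ha
  set J : Ideal (LaurentPolynomial ℤ) := Ideal.span (Set.range f) with hJ
  set I : Ideal (LaurentPolynomial ℤ) := Ideal.span {(T 1 - 1 : LaurentPolynomial ℤ)} with hI
  constructor
  · -- forward direction
    intro h
    have hker : ∀ p ∈ J, ((Ideal.Quotient.mk (Ideal.span {a})).comp evalOne) p = 0 := by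
      intro p hp
      have hle : J ≤ RingHom.ker ((Ideal.Quotient.mk (Ideal.span {a})).comp evalOne) := by
        rw [hJ, Ideal.span_le]
        rintro _ ⟨i, rfl⟩
        simp only [SetLike.mem_coe, RingHom.mem_ker, RingHom.comp_apply]
        rw [Ideal.Quotient.eq_zero_iff_mem, Ideal.mem_span_singleton]
        exact Finset.gcd_dvd (Finset.mem_univ i)
      exact hle hp
    set φ : (LaurentPolynomial ℤ ⧸ J) →+* ℤ ⧸ Ideal.span {a} :=
      Ideal.Quotient.lift J ((Ideal.Quotient.mk (Ideal.span {a})).comp evalOne) hker with hφ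
    have hT1 : φ (Ideal.Quotient.mk J (T 1)) = 1 := by
      rw [hφ, Ideal.Quotient.lift_mk, RingHom.comp_apply, evalOne_T, map_one]
    have key : ∀ x y, qRel J x y → φ x = φ y := by
      intro x y hxy
      induction hxy with
      | rel x y hr =>
          obtain ⟨c, hc⟩ := hr
          rw [← hc]
          simp only [qOp, map_add, map_mul, map_sub, map_one, hT1]
          ring
      | refl => rfl
      | symm _ _ _ ih => exact ih.symm
      | trans _ _ _ _ _ ih1 ih2 => exact ih1.trans ih2
    have h2 := key _ _ h
    rw [hφ, Ideal.Quotient.lift_mk, Ideal.Quotient.lift_mk, RingHom.comp_apply,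
      RingHom.comp_apply, Ideal.Quotient.eq, Ideal.mem_span_singleton] at h2
    have : a ∣ evalOne β - evalOne α := by
      obtain ⟨w, hw⟩ := h2
      exact ⟨-w, by linarith⟩
    exact Int.modEq_iff_dvd.mpr this
  · -- backward direction
    intro h
    obtain ⟨w, hw⟩ : a ∣ evalOne β - evalOne α := Int.modEq_iff_dvd.mp h
    -- C a ∈ I ⊔ J
    have hCfi : ∀ i, C (evalOne (f i)) ∈ I ⊔ J := by
      intro i
      have h1 : f i - C (evalOne (f i)) ∈ I := sub_evalOne_mem (f i)
      have h2 : f i ∈ J := Ideal.subset_span ⟨i, rfl⟩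
      have : C (evalOne (f i)) = f i - (f i - C (evalOne (f i))) := by ring
      rw [this]
      exact sub_mem (Ideal.mem_sup_right h2) (Ideal.mem_sup_left h1)
    have haK : C a ∈ I ⊔ J := by
      have h1 : (fun i => evalOne (f i)) '' ((Finset.univ : Finset (Fin k)) : Set (Fin k))
          ⊆ (Ideal.comap C (I ⊔ J) : Set ℤ) := by
        rintro _ ⟨i, _, rfl⟩
        exact hCfi i
      have h2 : a ∈ Ideal.comap (C : ℤ →+* LaurentPolynomial ℤ) (I ⊔ J) :=
        (Ideal.span_le.mpr h1) (gcd_mem_span Finset.univ _)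
      exact h2
    have hβα : β - α ∈ I ⊔ J := by
      have h1 : β - α = (β - C (evalOne β)) - (α - C (evalOne α)) + C a * C w := by
        rw [← map_mul, ← hw]
        rw [map_sub]
        ring
      rw [h1]
      exact add_mem (sub_mem (Ideal.mem_sup_left (sub_evalOne_mem β))
        (Ideal.mem_sup_left (sub_evalOne_mem α))) (Ideal.mul_mem_right _ _ haK)
    obtain ⟨u, hu, v, hv, huv⟩ := Submodule.mem_sup.mp hβα
    obtain ⟨q, hq⟩ := Ideal.mem_span_singleton'.mp hu
    apply Relation.EqvGen.rel
    refine ⟨Ideal.Quotient.mk J α - Ideal.Quotient.mk J q, ?_⟩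
    have hβ : (Ideal.Quotient.mk J) β
        = Ideal.Quotient.mk J α + Ideal.Quotient.mk J q
          * (Ideal.Quotient.mk J (T 1) - 1) := by
      have hb : β = α + q * (T 1 - 1) + v := by
        rw [hq]; linear_combination -huv
      rw [hb, map_add, map_add, map_mul, map_sub, map_one,
        Ideal.Quotient.eq_zero_iff_mem.mpr hv, add_zero]
    rw [qOp, hβ]
    ring
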